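/- arXiv:1002.3960 — 2 statements merged into one kernel-verified Lean document; each statement's English description precedes it below -/
import Mathlib

section
/- Let G be a finite group and p a prime. If p does not divide the index of x for every element x of G, then a Sylow p-subgroup of G is an abelian direct factor of G; that is, the Sylow p-subgroup P is abelian, normal in G, and there exists a normal subgroup H of G with P ∩ H = 1 and PH = G. -/
/-!
For each `x`, the centralizer of `x` has index prime to `p`, so it contains a Sylow
`p`-subgroup; thus every element centralizes, and in particular normalizes, some Sylow
`p`-subgroup. In the transitive conjugation action of `G` on its Sylow `p`-subgroups every
element therefore has a fixed point. By Burnside's counting lemma a transitive action without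
fixed-point-free elements has only one point, so `P` is the unique Sylow `p`-subgroup and is
centralized by all of `G`. A central Sylow subgroup is abelian and normal, and Burnside's
transfer theorem gives it a normal complement.
-/

open Subgroup

theorem MulAction.subsingleton_of_forall_exists_smul_eq_self {G X : Type*} [Group G] [Finite G]
    [MulAction G X] [Finite X] [IsPretransitive G X] (h : ∀ g : G, ∃ x : X, g • x = x) :
    Subsingleton X := by
  by_contra hX
  rw [not_subsingleton_iff_nontrivial, ← Finite.one_lt_card_iff_nontrivial] at hX
  cases nonempty_fintype G
  have one_orbit : Nat.card (orbitRel.Quotient G X) = 1 :=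
    Nat.card_eq_one_iff_unique.mpr
      ⟨(pretransitive_iff_subsingleton_quotient G X).mp inferInstance,
        (Nat.card_pos_iff.mp (by omega)).1.map (Quotient.mk _)⟩
  have burnside : ∑ g : G, Nat.card (fixedBy X g) = ∑ _g : G, 1 := by
    rw [← Nat.card_sigma, Nat.card_congr (sigmaFixedByEquivOrbitsProdGroup G X), Nat.card_prod,
      one_orbit, one_mul, Finset.sum_const, smul_eq_mul, mul_one, Finset.card_univ,
      Nat.card_eq_fintype_card]
  refine burnside.not_gt (Finset.sum_lt_sum (fun g _ ↦ ?_) ⟨1, Finset.mem_univ _, ?_⟩)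
  · obtain ⟨x, hx⟩ := h g
    exact Nat.card_pos_iff.mpr ⟨⟨x, hx⟩, inferInstance⟩
  · rwa [fixedBy_one_eq_univ, Nat.card_univ]

theorem Sylow.exists_le_of_not_dvd_index {G : Type*} [Group G] [Finite G] {p : ℕ} [Fact p.Prime]
    {H : Subgroup G} (hH : ¬ p ∣ H.index) : ∃ P : Sylow p G, (P : Subgroup G) ≤ H := by
  let Q : Sylow p H := Sylow.nonempty.some
  have hQ : ¬ p ∣ (Q.map H.subtype : Subgroup G).index := by
    rw [index_map_subtype]
    exact Nat.Prime.not_dvd_mul Fact.out Q.not_dvd_index hH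
  exact ⟨(Q.2.map H.subtype).toSylow hQ, map_subtype_le _⟩

theorem Sylow.centralizer_eq_top_of_forall_not_dvd_index {G : Type*} [Group G] [Finite G] {p : ℕ}
    [Fact p.Prime] (h : ∀ x : G, ¬ p ∣ (centralizer {x}).index) (P : Sylow p G) :
    centralizer (P : Set G) = ⊤ := by
  have centralizes : ∀ x : G, ∃ Q : Sylow p G, x ∈ centralizer (Q : Set G) := fun x ↦
    (Sylow.exists_le_of_not_dvd_index (h x)).imp fun Q hQ ↦
      mem_centralizer_iff.mpr fun y hy ↦ mem_centralizer_singleton_iff.mp (hQ hy)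
  have : Subsingleton (Sylow p G) :=
    MulAction.subsingleton_of_forall_exists_smul_eq_self fun x ↦
      (centralizes x).imp fun Q hQ ↦
        smul_eq_iff_mem_normalizer.mpr (centralizer_le_normalizer _ hQ)
  refine eq_top_iff.mpr fun x _ ↦ ?_
  obtain ⟨Q, hQ⟩ := centralizes x
  rwa [Subsingleton.elim P Q]

/-- If `p` does not divide the index of any element of the finite group `G`,
then a Sylow `p`-subgroup of `G` is an abelian direct factor of `G`. -/
theorem sylow_abelian_direct_factor_of_not_dvd_index
    {G : Type*} [Group G] [Finite G] (p : ℕ) (hp : p.Prime)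
    (h : ∀ x : G, ¬ p ∣ (Subgroup.centralizer {x}).index)
    (P : Sylow p G) :
    IsMulCommutative (P : Subgroup G) ∧ (P : Subgroup G).Normal ∧
      ∃ H : Subgroup G, H.Normal ∧ (P : Subgroup G) ⊓ H = ⊥ ∧ (P : Subgroup G) ⊔ H = ⊤ := by
  have : Fact p.Prime := ⟨hp⟩
  have hP := P.centralizer_eq_top_of_forall_not_dvd_index h
  have hNC : normalizer (P : Set G) ≤ centralizer (P : Set G) := hP ▸ le_top
  have hK := (MonoidHom.ker_transferSylow_isComplement' P hNC).symm
  refine ⟨le_centralizer_iff_isMulCommutative.mp (hP ▸ le_top),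
    normalizer_eq_top_iff.mp (eq_top_mono (centralizer_le_normalizer _) hP), _,
    MonoidHom.normal_ker _, disjoint_iff.mp hK.disjoint, hK.sup_eq_top⟩
end

section
/- Let G be a finite nonabelian group which contains a normal abelian subgroup A with C_G(A) = A. Let m be the smallest conjugacy class size of G greater than 1, and let M(G) be the subgroup of G generated by all elements whose index is 1 or m. Then M(G) is nilpotent of nilpotency class at most 3. -/
/-!
Let `x` have the minimal nontrivial index `m` and let `a ∈ A`. Since `A` is abelian and normal,
`a ↦ ⁅x, a⁆` is a homomorphism `A → A`, whose image `B` has order `|A : A ∩ C(x)|` and is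
normalised by `C(x)`. For `b = ⁅x, a⁆ ≠ 1` the `C(x)`-conjugates of `b` lie in `B ∖ {1}`, so
`|C(x) : C(x) ∩ C(b)| < |B|`, while `A ≤ C(b)` gives `|C(b) : C(x) ∩ C(b)| ≥ |B|`. Computing
`|G : C(x) ∩ C(b)|` through `C(x)` and through `C(b)` yields `|G : C(b)| < m`, so `b` is central.
Hence `⁅M, A⁆ ≤ Z(G)`; the three subgroups lemma then gives `⁅M, M⁆ ≤ C_G(A) = A`, so
`⁅⁅M, M⁆, M⁆ ≤ ⁅A, M⁆ ≤ Z(G)`.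
-/

open scoped commutatorElement IsMulCommutative

namespace Subgroup

variable {G : Type*} [Group G]

theorem relIndex_mul_index_comm (H K : Subgroup G) :
    K.relIndex H * H.index = H.relIndex K * K.index := by
  rw [← inf_relIndex_left, relIndex_mul_index inf_le_left, ← inf_relIndex_right,
    relIndex_mul_index inf_le_right]

theorem commutator_closure_le_center {S : Set G} {K : Subgroup G}
    (h : ∀ s ∈ S, ∀ k ∈ K, ⁅s, k⁆ ∈ center G) : ⁅closure S, K⁆ ≤ center G := by
  let π := QuotientGroup.mk' (center G)
  suffices hS : closure S ≤ (centralizer (K.map π)).comap π by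
    rw [commutator_le]
    intro g hg k hk
    have hcomm := hS hg (π k) (mem_map_of_mem π hk)
    rw [← QuotientGroup.ker_mk' (center G), MonoidHom.mem_ker, map_commutatorElement,
      commutatorElement_eq_one_iff_mul_comm]
    exact hcomm.symm
  rw [closure_le]
  rintro s hs _ ⟨k, hk, rfl⟩
  have hsk : π ⁅s, k⁆ = 1 := (QuotientGroup.eq_one_iff _).mpr (h s hs k hk)
  rw [map_commutatorElement, commutatorElement_eq_one_iff_mul_comm] at hsk
  exact hsk.symm

theorem commutator_le_centralizer_of_commutator_le_center {H K : Subgroup G}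
    (h : ⁅H, K⁆ ≤ center G) : ⁅H, H⁆ ≤ centralizer K := by
  have hHK : ⁅⁅H, K⁆, H⁆ = ⊥ :=
    commutator_eq_bot_iff_le_centralizer.mpr (h.trans (center_le_centralizer _))
  rw [← commutator_eq_bot_iff_le_centralizer]
  exact commutator_commutator_eq_bot_of_rotate hHK (by rwa [commutator_comm K H])

theorem relIndex_centralizer_lt_card {H B : Subgroup G} [Finite B]
    (hHB : ∀ h ∈ H, ∀ y ∈ B, h * y * h⁻¹ ∈ B) {b : G} (hb : b ∈ B) (hb1 : b ≠ 1) :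
    (centralizer {b}).relIndex H < Nat.card B := by
  let _ : MulAction H G :=
    MulAction.compHom G ((ConjAct.toConjAct : G ≃* ConjAct G).toMonoidHom.comp H.subtype)
  have hstab : MulAction.stabilizer H b = (centralizer {b}).subgroupOf H := by
    ext h
    rw [MulAction.mem_stabilizer_iff, mem_subgroupOf, mem_centralizer_singleton_iff]
    show (h : G) * b * (h : G)⁻¹ = b ↔ _
    rw [mul_inv_eq_iff_eq_mul, eq_comm]
  have horbit : MulAction.orbit H b ⊆ (B : Set G) \ {1} := by
    rintro _ ⟨h, rfl⟩
    refine ⟨hHB h h.2 b hb, ?_⟩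
    show (h : G) * b * (h : G)⁻¹ ≠ 1
    simpa [mul_inv_eq_one] using hb1
  have hB1 : 1 ∈ (B : Set G) := B.one_mem
  calc (centralizer {b}).relIndex H = (MulAction.orbit H b).ncard := by
        rw [← MulAction.index_stabilizer, hstab]; rfl
    _ ≤ ((B : Set G) \ {1}).ncard := Set.ncard_le_ncard horbit (Set.toFinite _)
    _ < (B : Set G).ncard := Set.ncard_sdiff_singleton_lt_of_mem hB1 (Set.toFinite _)
    _ = Nat.card B := Nat.card_coe_set_eq _ |>.symm

variable (A : Subgroup G) [A.Normal] [IsMulCommutative A]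

-- `open scoped IsMulCommutative` makes `A` a `CommGroup`, so `A →* A` has pointwise division.
def commutatorElementHom (x : G) : A →* G :=
  A.subtype.comp ((MulAut.conjNormal x).toMonoidHom / MonoidHom.id A)

variable {A}

@[simp]
theorem commutatorElementHom_apply (x : G) (a : A) :
    commutatorElementHom A x a = ⁅x, (a : G)⁆ := by
  simp [commutatorElementHom, commutatorElement_def, div_eq_mul_inv]

theorem ker_commutatorElementHom (x : G) :
    (commutatorElementHom A x).ker = (centralizer {x}).subgroupOf A := by
  ext a
  simp [mem_subgroupOf, mem_centralizer_singleton_iff, commutatorElement_eq_one_iff_mul_comm,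
    eq_comm]

theorem range_commutatorElementHom_le (x : G) : (commutatorElementHom A x).range ≤ A := by
  rintro _ ⟨a, rfl⟩
  exact SetLike.coe_mem _

theorem card_range_commutatorElementHom (x : G) :
    Nat.card (commutatorElementHom A x).range = (centralizer {x}).relIndex A := by
  rw [← index_ker, ker_commutatorElementHom]; rfl

theorem conj_mem_range_commutatorElementHom {x c : G} (hc : c ∈ centralizer {x}) {y : G}
    (hy : y ∈ (commutatorElementHom A x).range) :
    c * y * c⁻¹ ∈ (commutatorElementHom A x).range := by
  obtain ⟨a, rfl⟩ := hy
  have hcx : c * x * c⁻¹ = x := by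
    rw [mul_inv_eq_iff_eq_mul]; exact mem_centralizer_singleton_iff.mp hc
  refine ⟨⟨c * a * c⁻¹, Normal.conj_mem ‹_› _ a.2 c⟩, ?_⟩
  rw [commutatorElementHom_apply, commutatorElementHom_apply, conjugate_commutatorElement, hcx]

section MinimalIndex

variable [Finite G] {m : ℕ}

theorem mem_center_of_index_centralizer_lt
    (hm : IsLeast {k : ℕ | 1 < k ∧ ∃ x : G, (centralizer {x}).index = k} m) {y : G}
    (hy : (centralizer {y}).index < m) : y ∈ center G := by
  have hy1 : (centralizer {y}).index = 1 := by
    by_contra hne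
    have hlt : 1 < (centralizer {y}).index :=
      lt_of_le_of_ne (Nat.pos_of_ne_zero index_ne_zero_of_finite) (Ne.symm hne)
    exact (hm.2 ⟨hlt, y, rfl⟩).not_gt hy
  rwa [index_eq_one, centralizer_eq_top_iff_subset, Set.singleton_subset_iff] at hy1

theorem commutatorElement_mem_center_of_index_centralizer_eq
    (hm : IsLeast {k : ℕ | 1 < k ∧ ∃ x : G, (centralizer {x}).index = k} m) {x : G}
    (hx : (centralizer {x}).index = m) {a : G} (ha : a ∈ A) : ⁅x, a⁆ ∈ center G := by
  set b := ⁅x, a⁆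
  by_cases hb1 : b = 1
  · rw [hb1]; exact one_mem _
  set B := (commutatorElementHom A x).range
  have hbB : b ∈ B := ⟨⟨a, ha⟩, commutatorElementHom_apply x _⟩
  have hAb : A ≤ centralizer {b} := fun g hg => mem_centralizer_singleton_iff.mpr
    (setLike_mul_comm hg (range_commutatorElementHom_le x hbB))
  have hB : Nat.card B ≤ (centralizer {x}).relIndex (centralizer {b}) := by
    rw [card_range_commutatorElementHom]
    exact relIndex_le_of_le_right hAb index_ne_zero_of_finite
  have horbit : (centralizer {b}).relIndex (centralizer {x}) < Nat.card B :=
    relIndex_centralizer_lt_card (fun c hc y hy => conj_mem_range_commutatorElementHom hc hy)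
      hbB hb1
  refine mem_center_of_index_centralizer_lt hm (Nat.lt_of_mul_lt_mul_left (a := Nat.card B) ?_)
  calc Nat.card B * (centralizer {b}).index
      ≤ (centralizer {x}).relIndex (centralizer {b}) * (centralizer {b}).index :=
        Nat.mul_le_mul_right _ hB
    _ = (centralizer {b}).relIndex (centralizer {x}) * m := by
        rw [← hx, relIndex_mul_index_comm]
    _ < Nat.card B * m := Nat.mul_lt_mul_of_pos_right horbit (by linarith [hm.1.1])

end MinimalIndex

end Subgroup

theorem isaacs_M_nilpotent_class_le_three_general
    {G : Type*} [Group G] [Finite G]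
    (A : Subgroup G) (hA : A.Normal) (hAab : IsMulCommutative A)
    (hC : Subgroup.centralizer (A : Set G) = A)
    (m : ℕ)
    (hm : IsLeast {k : ℕ | 1 < k ∧ ∃ x : G, (Subgroup.centralizer {x}).index = k} m)
    (M : Subgroup G)
    (hM : M = Subgroup.closure {x : G | (Subgroup.centralizer {x}).index = 1 ∨
      (Subgroup.centralizer {x}).index = m}) :
    lowerCentralSeries M 3 = ⊥ := by
  have hMA : ⁅M, A⁆ ≤ Subgroup.center G := by
    rw [hM]
    refine Subgroup.commutator_closure_le_center fun x hx a ha => ?_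
    rcases hx with hx | hx
    · have hxZ := Subgroup.mem_center_of_index_centralizer_lt hm (hx ▸ hm.1.1)
      rw [commutatorElement_eq_one_iff_mul_comm.mpr (Subgroup.mem_center_iff.mp hxZ a).symm]
      exact one_mem _
    · exact Subgroup.commutatorElement_mem_center_of_index_centralizer_eq hm hx ha
  have hMM : ⁅M, M⁆ ≤ A :=
    hC ▸ Subgroup.commutator_le_centralizer_of_commutator_le_center hMA
  apply Subgroup.lowerCentralSeries_succ_eq_bot
  calc M.lowerCentralSeries 2 = ⁅⁅M, M⁆, M⁆ := rfl
    _ ≤ ⁅A, M⁆ := Subgroup.commutator_mono hMM le_rfl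
    _ = ⁅M, A⁆ := Subgroup.commutator_comm _ _
    _ ≤ Subgroup.center G := hMA

/-- (Isaacs) Let `G` be a finite nonabelian group containing a normal abelian subgroup `A`
with `C_G(A) = A`. Let `m` be the smallest conjugacy class size of `G` exceeding `1`, and
let `M(G)` be the subgroup generated by all elements of index `1` or `m`. Then `M(G)` is
nilpotent of class at most `3`. -/
theorem isaacs_M_nilpotent_class_le_three
    {G : Type*} [Group G] [Finite G] (hG : ∃ x y : G, x * y ≠ y * x)
    (A : Subgroup G) (hA : A.Normal) (hAab : IsMulCommutative A)
    (hC : Subgroup.centralizer (A : Set G) = A)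
    (m : ℕ)
    (hm : IsLeast {k : ℕ | 1 < k ∧ ∃ x : G, (Subgroup.centralizer {x}).index = k} m)
    (M : Subgroup G)
    (hM : M = Subgroup.closure {x : G | (Subgroup.centralizer {x}).index = 1 ∨
      (Subgroup.centralizer {x}).index = m}) :
    lowerCentralSeries M 3 = ⊥ :=
  isaacs_M_nilpotent_class_le_three_general A hA hAab hC m hm M hM
end
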